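/- arXiv:1701.06728 — 8 statements merged into one kernel-verified Lean document; each statement's English description precedes it below -/
import Mathlib

section
/- Let H be a real symmetric 3×3 matrix with entries H_{αβ} (α, β ∈ {0,1,2}) satisfying H_{00} = −1, and let ξ = (ξ₀, ξ₁, ξ₂) ∈ ℝ³. Let A(ξ) be the 4×4 real matrix A(ξ) = [[ξ₀ − 2H_{01}ξ₁ − 2H_{02}ξ₂, −H_{11}ξ₁ − H_{21}ξ₂, −H_{12}ξ₁ − H_{22}ξ₂, 0], [−ξ₁, ξ₀, 0, 0], [−ξ₂, 0, ξ₀, 0], [0, 0, 0, ξ₀]]. If ξ₀ ≠ 0 and Σ_{α,β∈{0,1,2}} H_{αβ} ξ_α ξ_β < 0 (i.e., ξ is H-timelike), then A(ξ) is invertible. -/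
open Matrix

/-- The principal symbol `ξ_α A^α` of the first-order reduction of the wave equation with inverse
metric `H`, in the unknowns `(w₀, w₁, w₂, w)`. -/
def principalSymbol (H : Matrix (Fin 3) (Fin 3) ℝ) (ξ : Fin 3 → ℝ) : Matrix (Fin 4) (Fin 4) ℝ :=
  !![ξ 0 - 2 * H 0 1 * ξ 1 - 2 * H 0 2 * ξ 2,
    -(H 1 1 * ξ 1) - H 2 1 * ξ 2,
    -(H 1 2 * ξ 1) - H 2 2 * ξ 2,
    0;
    -ξ 1, ξ 0, 0, 0;
    -ξ 2, 0, ξ 0, 0;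
    0, 0, 0, ξ 0]

theorem sum_sum_mul_mul_of_isSymm {H : Matrix (Fin 3) (Fin 3) ℝ} (hH : H.IsSymm) (ξ : Fin 3 → ℝ) :
    ∑ α : Fin 3, ∑ β : Fin 3, H α β * ξ α * ξ β =
      H 0 0 * ξ 0 ^ 2 + 2 * H 0 1 * ξ 0 * ξ 1 + 2 * H 0 2 * ξ 0 * ξ 2 +
        H 1 1 * ξ 1 ^ 2 + (H 1 2 + H 2 1) * ξ 1 * ξ 2 + H 2 2 * ξ 2 ^ 2 := by
  have h10 : H 1 0 = H 0 1 := hH.apply 0 1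
  have h20 : H 2 0 = H 0 2 := hH.apply 0 2
  simp only [Fin.sum_univ_three, h10, h20]
  ring

theorem det_principalSymbol (H : Matrix (Fin 3) (Fin 3) ℝ) (ξ : Fin 3 → ℝ) :
    (principalSymbol H ξ).det = ξ 0 ^ 2 *
      (ξ 0 ^ 2 - 2 * H 0 1 * ξ 0 * ξ 1 - 2 * H 0 2 * ξ 0 * ξ 2 -
        H 1 1 * ξ 1 ^ 2 - (H 1 2 + H 2 1) * ξ 1 * ξ 2 - H 2 2 * ξ 2 ^ 2) := by
  rw [principalSymbol, det_succ_column _ 3]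
  simp [Fin.sum_univ_succ, det_fin_three, Fin.succAbove]
  ring

theorem det_principalSymbol_of_isSymm {H : Matrix (Fin 3) (Fin 3) ℝ} (hH : H.IsSymm)
    (h00 : H 0 0 = -1) (ξ : Fin 3 → ℝ) :
    (principalSymbol H ξ).det = -(ξ 0 ^ 2 * ∑ α : Fin 3, ∑ β : Fin 3, H α β * ξ α * ξ β) := by
  rw [det_principalSymbol, sum_sum_mul_mul_of_isSymm hH, h00]
  ring

/-- For a real symmetric 3×3 matrix `H` with `H 0 0 = -1` and `ξ ∈ ℝ³` with
`ξ₀ ≠ 0` that is `H`-timelike (i.e. `Σ H_{αβ} ξ_α ξ_β < 0`), the principal-symbol matrix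
`A(ξ)` is invertible. -/
theorem principal_symbol_invertible
    (H : Matrix (Fin 3) (Fin 3) ℝ) (hH : H.IsSymm) (h00 : H 0 0 = -1)
    (ξ : Fin 3 → ℝ) (hξ0 : ξ 0 ≠ 0)
    (htimelike : ∑ α : Fin 3, ∑ β : Fin 3, H α β * ξ α * ξ β < 0) :
    IsUnit (!![ξ 0 - 2 * H 0 1 * ξ 1 - 2 * H 0 2 * ξ 2,
        -(H 1 1 * ξ 1) - H 2 1 * ξ 2,
        -(H 1 2 * ξ 1) - H 2 2 * ξ 2,
        0;
        -ξ 1, ξ 0, 0, 0;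
        -ξ 2, 0, ξ 0, 0;
        0, 0, 0, ξ 0] : Matrix (Fin 4) (Fin 4) ℝ) := by
  change IsUnit (principalSymbol H ξ)
  have hdet_pos : 0 < (principalSymbol H ξ).det := by
    rw [det_principalSymbol_of_isSymm hH h00]
    exact neg_pos.2 (mul_neg_of_pos_of_neg (sq_pos_of_ne_zero hξ0) htimelike)
  rw [isUnit_iff_isUnit_det]
  exact hdet_pos.ne'.isUnit
end

section
/- Let g and h be invertible real symmetric 3×3 matrices, each Lorentzian. Then the following two statements are equivalent: (i) for every nonzero V ∈ ℝ³, Vᵀ h V ≤ 0 implies Vᵀ g V < 0; (ii) for every nonzero ω ∈ ℝ³, ωᵀ g⁻¹ ω ≤ 0 implies ωᵀ h⁻¹ ω < 0. -/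
open Matrix

/-- A real symmetric 3×3 matrix `S` is Lorentzian if it is congruent, via an invertible
matrix `P`, to `diag (-1, 1, 1)`. -/
def IsLorentzian (S : Matrix (Fin 3) (Fin 3) ℝ) : Prop :=
  ∃ P : Matrix (Fin 3) (Fin 3) ℝ, IsUnit P ∧ Pᵀ * S * P = Matrix.diagonal ![(-1 : ℝ), 1, 1]

private lemma eta_mul_eta :
    (Matrix.diagonal ![(-1:ℝ),1,1]) * (Matrix.diagonal ![(-1:ℝ),1,1]) = 1 := by
  rw [Matrix.diagonal_mul_diagonal]
  have : (fun i => ![(-1:ℝ),1,1] i * ![(-1:ℝ),1,1] i) = fun _ => (1:ℝ) := by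
    funext i; fin_cases i <;> norm_num
  rw [this]; exact Matrix.diagonal_one

private lemma quad_eta (W : Fin 3 → ℝ) :
    W ⬝ᵥ (Matrix.diagonal ![(-1:ℝ),1,1] *ᵥ W) = -(W 0)^2 + (W 1)^2 + (W 2)^2 := by
  simp [dotProduct, Matrix.mulVec_diagonal, Fin.sum_univ_three]; ring

private lemma dot_three (a W : Fin 3 → ℝ) :
    a ⬝ᵥ W = a 0 * W 0 + a 1 * W 1 + a 2 * W 2 := by
  simp [dotProduct, Fin.sum_univ_three]

private lemma ne_zero_iff (V : Fin 3 → ℝ) :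
    V ≠ 0 ↔ ¬(V 0 = 0 ∧ V 1 = 0 ∧ V 2 = 0) := by
  constructor
  · intro h hc; exact h (by funext i; fin_cases i <;> simp [hc.1, hc.2.1, hc.2.2])
  · intro h hc; exact h ⟨by simp [hc], by simp [hc], by simp [hc]⟩

private lemma mulVec_ne_zero (P : Matrix (Fin 3) (Fin 3) ℝ) (hP : IsUnit P)
    (W : Fin 3 → ℝ) (hW : W ≠ 0) : P *ᵥ W ≠ 0 := by
  intro hc
  apply hW
  have hPd : IsUnit P.det := (Matrix.isUnit_iff_isUnit_det P).mp hP
  have := congrArg (fun x => P⁻¹ *ᵥ x) hc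
  simpa [Matrix.mulVec_mulVec, Matrix.nonsing_inv_mul P hPd] using this

private lemma inv_formula (m P : Matrix (Fin 3) (Fin 3) ℝ) (hP : IsUnit P)
    (hPm : Pᵀ * m * P = Matrix.diagonal ![(-1:ℝ),1,1]) :
    m⁻¹ = P * Matrix.diagonal ![(-1:ℝ),1,1] * Pᵀ := by
  have hPd : IsUnit P.det := (Matrix.isUnit_iff_isUnit_det P).mp hP
  have hPTd : IsUnit Pᵀ.det := by rwa [Matrix.det_transpose]
  apply Matrix.inv_eq_right_inv
  have h1 : m * P = Pᵀ⁻¹ * Matrix.diagonal ![(-1:ℝ),1,1] := by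
    have := congrArg (fun X => Pᵀ⁻¹ * X) hPm
    simpa [Matrix.mul_assoc, Matrix.nonsing_inv_mul Pᵀ hPTd, ← Matrix.mul_assoc,
      Matrix.nonsing_inv_mul_cancel_left] using this
  calc m * (P * Matrix.diagonal ![(-1:ℝ),1,1] * Pᵀ)
      = (m * P) * Matrix.diagonal ![(-1:ℝ),1,1] * Pᵀ := by
        simp [Matrix.mul_assoc]
    _ = Pᵀ⁻¹ * (Matrix.diagonal ![(-1:ℝ),1,1] * Matrix.diagonal ![(-1:ℝ),1,1]) * Pᵀ := by
        rw [h1]; simp [Matrix.mul_assoc]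
    _ = 1 := by rw [eta_mul_eta]; simp [Matrix.nonsing_inv_mul Pᵀ hPTd]

private lemma lorentzian_inv (m : Matrix (Fin 3) (Fin 3) ℝ) (hml : IsLorentzian m) :
    IsLorentzian m⁻¹ := by
  obtain ⟨P, hP, hPm⟩ := hml
  have hPd : IsUnit P.det := (Matrix.isUnit_iff_isUnit_det P).mp hP
  have hPTd : IsUnit Pᵀ.det := by rwa [Matrix.det_transpose]
  refine ⟨(Pᵀ)⁻¹, ?_, ?_⟩
  · exact (Matrix.isUnit_nonsing_inv_iff).mpr ((Matrix.isUnit_iff_isUnit_det _).mpr hPTd)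
  · rw [inv_formula m P hP hPm]
    rw [Matrix.transpose_nonsing_inv, Matrix.transpose_transpose]
    calc P⁻¹ * (P * Matrix.diagonal ![(-1:ℝ),1,1] * Pᵀ) * Pᵀ⁻¹
        = (P⁻¹ * P) * Matrix.diagonal ![(-1:ℝ),1,1] * (Pᵀ * Pᵀ⁻¹) := by
          simp [Matrix.mul_assoc]
      _ = Matrix.diagonal ![(-1:ℝ),1,1] := by
          rw [Matrix.nonsing_inv_mul P hPd, Matrix.mul_nonsing_inv Pᵀ hPTd]; simp

private lemma mink_sep {a0 a1 a2 w0 w1 w2 : ℝ}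
    (ha : ¬(a0 = 0 ∧ a1 = 0 ∧ a2 = 0))
    (h1 : -a0^2 + a1^2 + a2^2 ≤ 0) (h2 : -w0^2 + w1^2 + w2^2 < 0) :
    a0 * w0 + a1 * w1 + a2 * w2 ≠ 0 := by
  have ha0 : a0 ≠ 0 := by
    rintro rfl
    exact ha ⟨rfl, by nlinarith [sq_nonneg a1, sq_nonneg a2], by nlinarith [sq_nonneg a1, sq_nonneg a2]⟩
  have h3 : 0 < a0^2 := by positivity
  intro hc
  have c1 : (a1*w1 + a2*w2)^2 ≤ (a1^2 + a2^2) * (w1^2 + w2^2) := by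
    nlinarith [sq_nonneg (a1*w2 - a2*w1)]
  have c2 : (a1^2 + a2^2) * (w1^2 + w2^2) ≤ a0^2 * (w1^2 + w2^2) := by
    nlinarith [sq_nonneg w1, sq_nonneg w2]
  have c3 : a0^2 * (w1^2 + w2^2) < a0^2 * w0^2 := by nlinarith
  have c4 : (a0*w0)^2 = (a1*w1 + a2*w2)^2 := by
    have : a0*w0 = -(a1*w1 + a2*w2) := by linarith
    rw [this]; ring
  nlinarith [c1, c2, c3, c4]

private lemma mink_dual {a0 a1 a2 : ℝ}
    (ha : ¬(a0 = 0 ∧ a1 = 0 ∧ a2 = 0)) (h1 : 0 ≤ -a0^2 + a1^2 + a2^2) :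
    ∃ w0 w1 w2 : ℝ, ¬(w0 = 0 ∧ w1 = 0 ∧ w2 = 0) ∧
      -w0^2 + w1^2 + w2^2 ≤ 0 ∧ a0 * w0 + a1 * w1 + a2 * w2 = 0 := by
  have hs : 0 < a1^2 + a2^2 := by
    rcases lt_or_eq_of_le (by positivity : (0:ℝ) ≤ a1^2 + a2^2) with h | h
    · exact h
    · exfalso
      have h1' : a1 = 0 ∧ a2 = 0 := by constructor <;> nlinarith [sq_nonneg a1, sq_nonneg a2]
      have : a0 = 0 := by nlinarith [h1'.1, h1'.2]
      exact ha ⟨this, h1'.1, h1'.2⟩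
  refine ⟨a1^2 + a2^2, -a1 * a0, -a2 * a0, ?_, ?_, by ring⟩
  · intro hc; exact absurd hc.1 (ne_of_gt hs)
  · nlinarith

private lemma dot_mulVec_left (P : Matrix (Fin 3) (Fin 3) ℝ) (v w : Fin 3 → ℝ) :
    (P *ᵥ v) ⬝ᵥ w = v ⬝ᵥ (Pᵀ *ᵥ w) := by
  rw [dotProduct_comm, Matrix.dotProduct_mulVec, Matrix.mulVec_transpose]
  exact dotProduct_comm _ _

private lemma quad_congr (m P : Matrix (Fin 3) (Fin 3) ℝ) (W : Fin 3 → ℝ) :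
    (P *ᵥ W) ⬝ᵥ (m *ᵥ (P *ᵥ W)) = W ⬝ᵥ ((Pᵀ * m * P) *ᵥ W) := by
  rw [dot_mulVec_left]
  simp [Matrix.mulVec_mulVec, Matrix.mul_assoc]

/-- Separation: a causal covector cannot annihilate a timelike vector. -/
private lemma sep_lemma (m : Matrix (Fin 3) (Fin 3) ℝ) (hml : IsLorentzian m)
    (ω V : Fin 3 → ℝ) (hω : ω ≠ 0)
    (h1 : ω ⬝ᵥ (m⁻¹ *ᵥ ω) ≤ 0) (h2 : V ⬝ᵥ (m *ᵥ V) < 0) :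
    ω ⬝ᵥ V ≠ 0 := by
  obtain ⟨P, hP, hPm⟩ := hml
  have hPd : IsUnit P.det := (Matrix.isUnit_iff_isUnit_det P).mp hP
  set α : Fin 3 → ℝ := Pᵀ *ᵥ ω with hα
  set W : Fin 3 → ℝ := P⁻¹ *ᵥ V with hW
  have hVW : V = P *ᵥ W := by
    rw [hW, Matrix.mulVec_mulVec, Matrix.mul_nonsing_inv P hPd, Matrix.one_mulVec]
  have hαne : α ≠ 0 := by
    apply mulVec_ne_zero Pᵀ _ ω hω
    exact (Matrix.isUnit_iff_isUnit_det Pᵀ).mpr (by rwa [Matrix.det_transpose])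
  -- quadratic form of V in Minkowski coordinates
  have hq2 : W ⬝ᵥ (Matrix.diagonal ![(-1:ℝ),1,1] *ᵥ W) < 0 := by
    rw [← hPm, ← quad_congr, ← hVW]; exact h2
  -- quadratic form of ω for the inverse metric
  have hq1 : α ⬝ᵥ (Matrix.diagonal ![(-1:ℝ),1,1] *ᵥ α) ≤ 0 := by
    have hinv := inv_formula m P hP hPm
    have : ω ⬝ᵥ (m⁻¹ *ᵥ ω) = α ⬝ᵥ (Matrix.diagonal ![(-1:ℝ),1,1] *ᵥ α) := by
      rw [hα, hinv, ← Matrix.mulVec_mulVec, ← Matrix.mulVec_mulVec,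
        Matrix.dotProduct_mulVec, Matrix.mulVec_transpose]
    rwa [this] at h1
  -- pairing in Minkowski coordinates
  have hpair : ω ⬝ᵥ V = α ⬝ᵥ W := by
    rw [hα, hVW, Matrix.dotProduct_mulVec, Matrix.mulVec_transpose]
  rw [hpair, dot_three]
  rw [quad_eta] at hq1 hq2
  exact mink_sep ((ne_zero_iff α).mp hαne) (by linarith) (by linarith)

/-- If a covector annihilates no nonzero causal vector, it is timelike for the inverse. -/
private lemma dual_timelike (m : Matrix (Fin 3) (Fin 3) ℝ) (hml : IsLorentzian m)
    (ω : Fin 3 → ℝ) (hω : ω ≠ 0)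
    (H : ∀ V : Fin 3 → ℝ, V ≠ 0 → V ⬝ᵥ (m *ᵥ V) ≤ 0 → ω ⬝ᵥ V ≠ 0) :
    ω ⬝ᵥ (m⁻¹ *ᵥ ω) < 0 := by
  obtain ⟨P, hP, hPm⟩ := hml
  set α : Fin 3 → ℝ := Pᵀ *ᵥ ω with hα
  have hαne : α ≠ 0 := by
    apply mulVec_ne_zero Pᵀ _ ω hω
    exact (Matrix.isUnit_iff_isUnit_det Pᵀ).mpr (by rwa [Matrix.det_transpose, ← Matrix.isUnit_iff_isUnit_det])
  have hqeq : ω ⬝ᵥ (m⁻¹ *ᵥ ω) = α ⬝ᵥ (Matrix.diagonal ![(-1:ℝ),1,1] *ᵥ α) := by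
    rw [hα, inv_formula m P hP hPm, ← Matrix.mulVec_mulVec, ← Matrix.mulVec_mulVec,
      Matrix.dotProduct_mulVec, Matrix.mulVec_transpose]
  rw [hqeq, quad_eta]
  by_contra hcon
  push_neg at hcon
  obtain ⟨w0, w1, w2, hWne, hWq, hWdot⟩ :=
    mink_dual ((ne_zero_iff α).mp hαne) (by linarith)
  set W : Fin 3 → ℝ := ![w0, w1, w2] with hWdef
  have hW0 : W 0 = w0 := rfl
  have hW1 : W 1 = w1 := rfl
  have hW2 : W 2 = w2 := rfl
  have hWne' : W ≠ 0 := by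
    rw [ne_zero_iff, hW0, hW1, hW2]; exact hWne
  set V : Fin 3 → ℝ := P *ᵥ W with hV
  have hVne : V ≠ 0 := mulVec_ne_zero P hP W hWne'
  have hVq : V ⬝ᵥ (m *ᵥ V) ≤ 0 := by
    rw [hV, quad_congr, hPm, quad_eta, hW0, hW1, hW2]; linarith
  have hpair : ω ⬝ᵥ V = α ⬝ᵥ W := by
    rw [hα, hV, Matrix.dotProduct_mulVec, Matrix.mulVec_transpose]
  have := H V hVne hVq
  rw [hpair, dot_three, hW0, hW1, hW2] at this
  exact this hWdot

/-- the one-direction implication, applied twice to get the iff -/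
private lemma forward_dir (g h : Matrix (Fin 3) (Fin 3) ℝ)
    (hgl : IsLorentzian g) (hhl : IsLorentzian h)
    (H : ∀ V : Fin 3 → ℝ, V ≠ 0 → V ⬝ᵥ (h *ᵥ V) ≤ 0 → V ⬝ᵥ (g *ᵥ V) < 0) :
    ∀ ω : Fin 3 → ℝ, ω ≠ 0 → ω ⬝ᵥ (g⁻¹ *ᵥ ω) ≤ 0 → ω ⬝ᵥ (h⁻¹ *ᵥ ω) < 0 := by
  intro ω hω hcaus
  apply dual_timelike h hhl ω hω
  intro V hV hVq
  exact sep_lemma g hgl ω V hω hcaus (H V hV hVq)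

/-- For invertible symmetric Lorentzian 3×3 matrices `g` and `h`, the inclusion
"every nonzero `h`-causal vector is `g`-timelike" is equivalent to the dual inclusion
"every nonzero `g⁻¹`-causal covector is `h⁻¹`-timelike". -/
theorem causal_cone_inclusion_duality
    (g h : Matrix (Fin 3) (Fin 3) ℝ)
    (hg : IsUnit g) (hh : IsUnit h)
    (hgs : g.IsSymm) (hhs : h.IsSymm)
    (hgl : IsLorentzian g) (hhl : IsLorentzian h) :
    (∀ V : Fin 3 → ℝ, V ≠ 0 → V ⬝ᵥ (h *ᵥ V) ≤ 0 → V ⬝ᵥ (g *ᵥ V) < 0) ↔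
      (∀ ω : Fin 3 → ℝ, ω ≠ 0 → ω ⬝ᵥ (g⁻¹ *ᵥ ω) ≤ 0 → ω ⬝ᵥ (h⁻¹ *ᵥ ω) < 0) := by
  constructor
  · exact forward_dir g h hgl hhl
  · intro H
    have hgd : IsUnit g.det := (Matrix.isUnit_iff_isUnit_det g).mp hg
    have hhd : IsUnit h.det := (Matrix.isUnit_iff_isUnit_det h).mp hh
    have := forward_dir h⁻¹ g⁻¹ (lorentzian_inv h hhl) (lorentzian_inv g hgl) H
    simpa [Matrix.nonsing_inv_nonsing_inv g hgd, Matrix.nonsing_inv_nonsing_inv h hhd]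
      using this
end

section
/- Let δ > 0, let α and ε be real numbers with 0 ≤ α ≤ 1/8 and 0 ≤ ε ≤ δ²/16, let T be a real number with 0 < T ≤ 2/δ, and let f : [0, T] → ℝ be twice continuously differentiable with |f(0) − 1| ≤ α and |f''(x)| ≤ ε for all x ∈ [0, T]. Then for every s ∈ (0, T]: if f(s) ≤ 1/4, then f'(s) ≤ −δ/4. -/
/-!
Taylor's formula at `s` with `f'' ≤ ε` gives `f 0 ≤ f s - s f'(s) + ε s² / 2`. Since `f 0 ≥ 7/8`,
`f s ≤ 1/4` and `ε s² ≤ (δ s)² / 16 ≤ 1/4`, this forces `s f'(s) ≤ -1/2 ≤ -δ s / 4`.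
-/

open Set

section

variable {D : Set ℝ} {f f' f'' : ℝ → ℝ} {a b C : ℝ}

theorem Convex.monotoneOn_of_hasDerivWithinAt_nonneg (hD : Convex ℝ D)
    (hf : ∀ x ∈ D, HasDerivWithinAt f (f' x) D x) (hf'₀ : ∀ x ∈ interior D, 0 ≤ f' x) :
    MonotoneOn f D :=
  _root_.monotoneOn_of_hasDerivWithinAt_nonneg hD (fun x hx ↦ (hf x hx).continuousWithinAt)
    (fun x hx ↦ (hf x (interior_subset hx)).mono interior_subset) hf'₀

theorem image_sub_le_mul_sub_of_hasDerivWithinAt_le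
    (hf : ∀ x ∈ Icc a b, HasDerivWithinAt f (f' x) (Icc a b) x)
    (hbd : ∀ x ∈ Icc a b, f' x ≤ C) {x : ℝ} (hx : x ∈ Icc a b) :
    f b - f x ≤ C * (b - x) := by
  have hmono : MonotoneOn (fun y ↦ C * y - f y) (Icc a b) :=
    (convex_Icc a b).monotoneOn_of_hasDerivWithinAt_nonneg
      (fun y hy ↦ ((hasDerivWithinAt_id y _).const_mul C).sub (hf y hy))
      (fun y hy ↦ by simpa using hbd y (interior_subset hy))
  have := hmono hx ⟨hx.1.trans hx.2, le_rfl⟩ hx.2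
  simp only at this
  linarith

theorem le_taylor_add_sq_of_hasDerivWithinAt_le
    (hf : ∀ x ∈ Icc a b, HasDerivWithinAt f (f' x) (Icc a b) x)
    (hf' : ∀ x ∈ Icc a b, HasDerivWithinAt f' (f'' x) (Icc a b) x)
    (hbd : ∀ x ∈ Icc a b, f'' x ≤ C) (hab : a ≤ b) :
    f a ≤ f b + f' b * (a - b) + C * (b - a) ^ 2 / 2 := by
  set k : ℝ → ℝ := fun x ↦ f x - (f' b * x + C * (x - b) ^ 2 / 2)
  have hk : ∀ x ∈ Icc a b, HasDerivWithinAt k (f' x - (f' b + C * (x - b))) (Icc a b) x := by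
    intro x hx
    have hpoly := ((hasDerivAt_id' x).const_mul (f' b)).add
      ((((hasDerivAt_id' x).sub_const b).pow 2).const_mul C |>.div_const 2)
    exact (hf x hx).sub (hpoly.congr_deriv (by ring)).hasDerivWithinAt
  have hmono : MonotoneOn k (Icc a b) :=
    (convex_Icc a b).monotoneOn_of_hasDerivWithinAt_nonneg hk fun x hx ↦ by
      have := image_sub_le_mul_sub_of_hasDerivWithinAt_le hf' hbd (interior_subset hx)
      linarith
  have := hmono ⟨le_rfl, hab⟩ ⟨hab, le_rfl⟩ hab
  simp only [k] at this
  linarith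

end

theorem small_value_implies_negative_slope_general
    (δ α ε T : ℝ) (hδ : 0 < δ) (hα : α ≤ 1 / 8)
    (hε : ε ≤ δ ^ 2 / 16) (hT : T ≤ 2 / δ)
    (f f' f'' : ℝ → ℝ)
    (hf : ∀ x ∈ Set.Icc (0:ℝ) T, HasDerivWithinAt f (f' x) (Set.Icc 0 T) x)
    (hf' : ∀ x ∈ Set.Icc (0:ℝ) T, HasDerivWithinAt f' (f'' x) (Set.Icc 0 T) x)
    (h0 : |f 0 - 1| ≤ α)
    (hbd : ∀ x ∈ Set.Icc (0:ℝ) T, |f'' x| ≤ ε) :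
    ∀ s ∈ Set.Ioc (0:ℝ) T, f s ≤ 1 / 4 → f' s ≤ -(δ / 4) := by
  rintro s ⟨hs0, hsT⟩ hfs
  have hsub : Icc 0 s ⊆ Icc 0 T := Icc_subset_Icc_right hsT
  have htaylor : f 0 ≤ f s + f' s * (0 - s) + ε * (s - 0) ^ 2 / 2 :=
    le_taylor_add_sq_of_hasDerivWithinAt_le (fun x hx ↦ (hf x (hsub hx)).mono hsub)
      (fun x hx ↦ (hf' x (hsub hx)).mono hsub) (fun x hx ↦ (abs_le.mp (hbd x (hsub hx))).2)
      hs0.le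
  have hf0 : 7 / 8 ≤ f 0 := by linarith [(abs_le.mp h0).1]
  have hsδ : s * δ ≤ 2 := (le_div_iff₀ hδ).mp (hsT.trans hT)
  have hεs : ε * s ^ 2 ≤ 1 / 4 := by
    calc ε * s ^ 2 ≤ δ ^ 2 / 16 * s ^ 2 := by gcongr
      _ = (s * δ) ^ 2 / 16 := by ring
      _ ≤ 2 ^ 2 / 16 := by gcongr
      _ = 1 / 4 := by norm_num
  have hslope : s * f' s ≤ s * -(δ / 4) := by linarith
  exact le_of_mul_le_mul_left hslope hs0

/-- If `f` is twice continuously differentiable on `[0,T]` with `|f(0) − 1| ≤ α`,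
`|f''| ≤ ε`, where `0 ≤ α ≤ 1/8`, `0 ≤ ε ≤ δ²/16` and `0 < T ≤ 2/δ`, then smallness
`f(s) ≤ 1/4` at some `s ∈ (0,T]` forces `f'(s) ≤ −δ/4`. -/
theorem small_value_implies_negative_slope
    (δ α ε T : ℝ) (hδ : 0 < δ) (hα0 : 0 ≤ α) (hα : α ≤ 1 / 8)
    (hε0 : 0 ≤ ε) (hε : ε ≤ δ ^ 2 / 16) (hT0 : 0 < T) (hT : T ≤ 2 / δ)
    (f f' f'' : ℝ → ℝ)
    (hf : ∀ x ∈ Set.Icc (0:ℝ) T, HasDerivWithinAt f (f' x) (Set.Icc 0 T) x)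
    (hf' : ∀ x ∈ Set.Icc (0:ℝ) T, HasDerivWithinAt f' (f'' x) (Set.Icc 0 T) x)
    (hf''cont : ContinuousOn f'' (Set.Icc 0 T))
    (h0 : |f 0 - 1| ≤ α)
    (hbd : ∀ x ∈ Set.Icc (0:ℝ) T, |f'' x| ≤ ε) :
    ∀ s ∈ Set.Ioc (0:ℝ) T, f s ≤ 1 / 4 → f' s ≤ -(δ / 4) :=
  small_value_implies_negative_slope_general δ α ε T hδ hα hε hT f f' f'' hf hf' h0 hbd
end

section
/- Let δ > 0, let α, ε, M be real numbers with 0 ≤ α ≤ 1/4, 0 ≤ ε ≤ δ²/16, and M ≥ 0, let T be a real number with 0 < T ≤ 2/δ, and let f : [0, T] → ℝ be twice continuously differentiable with f(0) ≥ 1 − α, |f''(x)| ≤ ε, and |f'(x)| ≤ M for all x ∈ [0, T]. Then for every s ∈ [0, T] with f'(s) > 0 one has f(s) ≥ 1/2. Consequently, if in addition f(s) > 0 for all s ∈ [0, T], then max(f'(s), 0) ≤ 2·M·f(s) for every s ∈ [0, T]. -/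
/-!
Since `|f''| ≤ ε`, the slope can fall by at most `ε s` on `[0, s]`, so `f'(s) ≥ 0` forces
`f' ≥ -ε s` there and hence `f(s) ≥ f(0) - ε s² ≥ 3/4 - 1/4`, because `ε s² ≤ (δ s)² / 16 ≤ 1/4`.
Where `f' > 0` this gives `f' ≤ M ≤ 2 M f`; elsewhere `max(f', 0) = 0`.
-/

open Set

theorem mul_sub_le_sub_of_hasDerivWithinAt_Icc {f f' : ℝ → ℝ} {a b C : ℝ} (hab : a ≤ b)
    (hf : ∀ x ∈ Icc a b, HasDerivWithinAt f (f' x) (Icc a b) x)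
    (hC : ∀ x ∈ Icc a b, C ≤ f' x) :
    C * (b - a) ≤ f b - f a := by
  have hderiv : ∀ x ∈ interior (Icc a b), HasDerivAt f (f' x) x := by
    intro x hx
    rw [interior_Icc] at hx
    exact (hf x (Ioo_subset_Icc_self hx)).hasDerivAt (Icc_mem_nhds hx.1 hx.2)
  refine (convex_Icc a b).mul_sub_le_image_sub_of_le_deriv
    (fun x hx => (hf x hx).continuousWithinAt)
    (fun x hx => (hderiv x hx).differentiableAt.differentiableWithinAt)
    (fun x hx => ?_) a (left_mem_Icc.2 hab) b (right_mem_Icc.2 hab) hab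
  rw [(hderiv x hx).deriv]
  exact hC x (interior_subset hx)

theorem sub_mul_sq_le_of_deriv_nonneg {f f' f'' : ℝ → ℝ} {a b ε : ℝ} (hab : a ≤ b)
    (hf : ∀ x ∈ Icc a b, HasDerivWithinAt f (f' x) (Icc a b) x)
    (hf' : ∀ x ∈ Icc a b, HasDerivWithinAt f' (f'' x) (Icc a b) x)
    (hf'' : ∀ x ∈ Icc a b, |f'' x| ≤ ε) (hb : 0 ≤ f' b) :
    f a - ε * (b - a) ^ 2 ≤ f b := by
  have hbIcc : b ∈ Icc a b := right_mem_Icc.2 hab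
  have hε : 0 ≤ ε := (abs_nonneg _).trans (hf'' b hbIcc)
  have hslope : ∀ x ∈ Icc a b, -(ε * (b - a)) ≤ f' x := by
    intro x hx
    have hlip : |f' b - f' x| ≤ ε * |b - x| := by
      simpa using (convex_Icc a b).norm_image_sub_le_of_norm_hasDerivWithin_le hf'
        (fun y hy => by simpa using hf'' y hy) hx hbIcc
    rw [abs_of_nonneg (sub_nonneg.2 hx.2)] at hlip
    nlinarith [le_abs_self (f' b - f' x), hx.1]
  nlinarith [mul_sub_le_sub_of_hasDerivWithinAt_Icc hab hf hslope]

theorem positive_part_slope_ratio_bound_general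
    (δ α ε M T : ℝ) (hδ : 0 < δ) (hα : α ≤ 1 / 4)
    (hε : ε ≤ δ ^ 2 / 16) (hM : 0 ≤ M) (hT : T ≤ 2 / δ)
    (f f' f'' : ℝ → ℝ)
    (hf : ∀ x ∈ Set.Icc (0:ℝ) T, HasDerivWithinAt f (f' x) (Set.Icc 0 T) x)
    (hf' : ∀ x ∈ Set.Icc (0:ℝ) T, HasDerivWithinAt f' (f'' x) (Set.Icc 0 T) x)
    (h0 : 1 - α ≤ f 0)
    (hbd : ∀ x ∈ Set.Icc (0:ℝ) T, |f'' x| ≤ ε)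
    (hbd' : ∀ x ∈ Set.Icc (0:ℝ) T, |f' x| ≤ M) :
    (∀ s ∈ Set.Icc (0:ℝ) T, 0 < f' s → 1 / 2 ≤ f s) ∧
      ((∀ s ∈ Set.Icc (0:ℝ) T, 0 < f s) →
        ∀ s ∈ Set.Icc (0:ℝ) T, max (f' s) 0 ≤ 2 * M * f s) := by
  have half_le : ∀ s ∈ Icc (0:ℝ) T, 0 < f' s → 1 / 2 ≤ f s := by
    rintro s ⟨hs0, hsT⟩ hpos
    have hsub : Icc 0 s ⊆ Icc 0 T := Icc_subset_Icc_right hsT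
    have hgrowth := sub_mul_sq_le_of_deriv_nonneg hs0 (fun x hx => (hf x (hsub hx)).mono hsub)
      (fun x hx => (hf' x (hsub hx)).mono hsub) (fun x hx => hbd x (hsub hx)) hpos.le
    have hsδ : s * δ ≤ 2 := (le_div_iff₀ hδ).1 (hsT.trans hT)
    have hεs : ε * s ^ 2 ≤ 1 / 4 :=
      calc ε * s ^ 2 ≤ δ ^ 2 / 16 * s ^ 2 := by gcongr
        _ = (s * δ) ^ 2 / 16 := by ring
        _ ≤ 2 ^ 2 / 16 := by gcongr
        _ = 1 / 4 := by norm_num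
    rw [sub_zero] at hgrowth
    linarith
  refine ⟨half_le, fun hfpos s hs => ?_⟩
  have hrhs : 0 ≤ 2 * M * f s := by have := hfpos s hs; positivity
  rcases le_or_gt (f' s) 0 with hneg | hpos
  · rwa [max_eq_right hneg]
  · rw [max_eq_left hpos.le]
    have hM' : f' s ≤ M := (le_abs_self _).trans (hbd' s hs)
    nlinarith [half_le s hs hpos]

/-- If `f` is twice continuously differentiable on `[0,T]` with `f(0) ≥ 1 − α`,
`|f''| ≤ ε`, `|f'| ≤ M`, where `0 ≤ α ≤ 1/4`, `0 ≤ ε ≤ δ²/16`, `M ≥ 0` and `0 < T ≤ 2/δ`,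
then `f'(s) > 0` forces `f(s) ≥ 1/2`; consequently, if moreover `f > 0` on `[0,T]`, then
`max(f'(s), 0) ≤ 2·M·f(s)` on `[0,T]`. -/
theorem positive_part_slope_ratio_bound
    (δ α ε M T : ℝ) (hδ : 0 < δ) (hα0 : 0 ≤ α) (hα : α ≤ 1 / 4)
    (hε0 : 0 ≤ ε) (hε : ε ≤ δ ^ 2 / 16) (hM : 0 ≤ M) (hT0 : 0 < T) (hT : T ≤ 2 / δ)
    (f f' f'' : ℝ → ℝ)
    (hf : ∀ x ∈ Set.Icc (0:ℝ) T, HasDerivWithinAt f (f' x) (Set.Icc 0 T) x)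
    (hf' : ∀ x ∈ Set.Icc (0:ℝ) T, HasDerivWithinAt f' (f'' x) (Set.Icc 0 T) x)
    (hf''cont : ContinuousOn f'' (Set.Icc 0 T))
    (h0 : 1 - α ≤ f 0)
    (hbd : ∀ x ∈ Set.Icc (0:ℝ) T, |f'' x| ≤ ε)
    (hbd' : ∀ x ∈ Set.Icc (0:ℝ) T, |f' x| ≤ M) :
    (∀ s ∈ Set.Icc (0:ℝ) T, 0 < f' s → 1 / 2 ≤ f s) ∧
      ((∀ s ∈ Set.Icc (0:ℝ) T, 0 < f s) →
        ∀ s ∈ Set.Icc (0:ℝ) T, max (f' s) 0 ≤ 2 * M * f s) :=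
  positive_part_slope_ratio_bound_general δ α ε M T hδ hα hε hM hT f f' f'' hf hf' h0 hbd hbd'
end

section
/- Let H > 0 and b > 0 be real numbers and let F : [0, b] → ℝ be twice continuously differentiable with F''(x) ≤ H for all x ∈ [0, b]. If 0 < F'(b) ≤ 2·H·b, then F(b) − inf_{x ∈ [0,b]} F(x) ≥ F'(b)²/(4H). -/
/-!
From `F'' ≤ H` one gets `F'(x) ≥ F'(b) - H (b - x)`, and integrating once more,
`F(b) - F(x) ≥ F'(b) (b - x) - H (b - x)² / 2` on `[0, b]`. The choice `b - x = F'(b) / (2H)`,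
admissible because `F'(b) ≤ 2Hb`, makes the right-hand side `3 F'(b)² / (8H) ≥ F'(b)² / (4H)`.
-/

open Set

theorem sub_le_sub_of_hasDerivWithinAt_le {D : Set ℝ} (hD : Convex ℝ D) {f g f' g' : ℝ → ℝ}
    (hf : ∀ x ∈ D, HasDerivWithinAt f (f' x) D x) (hg : ∀ x ∈ D, HasDerivWithinAt g (g' x) D x)
    (hle : ∀ x ∈ D, g' x ≤ f' x) {x y : ℝ} (hx : x ∈ D) (hy : y ∈ D) (hxy : x ≤ y) :
    g y - g x ≤ f y - f x := by
  have hdiff : ∀ z ∈ D, HasDerivWithinAt (fun z => f z - g z) (f' z - g' z) D z :=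
    fun z hz => (hf z hz).sub (hg z hz)
  have hmono : MonotoneOn (fun z => f z - g z) D :=
    monotoneOn_of_hasDerivWithinAt_nonneg hD
      (fun z hz => (hdiff z hz).continuousWithinAt)
      (fun z hz => (hdiff z (interior_subset hz)).mono interior_subset)
      (fun z hz => sub_nonneg.2 (hle z (interior_subset hz)))
  linarith [hmono hx hy hxy]

theorem sub_mul_sub_sub_sq_le_of_hasDerivWithinAt {a b H : ℝ} {F F' F'' : ℝ → ℝ}
    (hF : ∀ x ∈ Icc a b, HasDerivWithinAt F (F' x) (Icc a b) x)
    (hF' : ∀ x ∈ Icc a b, HasDerivWithinAt F' (F'' x) (Icc a b) x)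
    (hbd : ∀ x ∈ Icc a b, F'' x ≤ H) {x : ℝ} (hx : x ∈ Icc a b) :
    F' b * (b - x) - H * (b - x) ^ 2 / 2 ≤ F b - F x := by
  have hb : b ∈ Icc a b := right_mem_Icc.2 (hx.1.trans hx.2)
  have hlin : ∀ z ∈ Icc a b, HasDerivWithinAt (fun z => H * z) H (Icc a b) z :=
    fun z _ => by simpa using ((hasDerivAt_id z).const_mul H).hasDerivWithinAt
  have hslope : ∀ y ∈ Icc a b, F' b - H * (b - y) ≤ F' y := by
    intro y hy
    have := sub_le_sub_of_hasDerivWithinAt_le (convex_Icc a b) hlin hF' hbd hy hb hy.2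
    linarith
  have hquad : ∀ y ∈ Icc a b, HasDerivWithinAt (fun z => F' b * z + H * (b - z) ^ 2 / 2)
      (F' b - H * (b - y)) (Icc a b) y := by
    intro y _
    have hsq := (((hasDerivAt_id y).const_sub b).pow 2).const_mul H |>.div_const 2
    exact (((hasDerivAt_id y).const_mul (F' b)).add hsq).hasDerivWithinAt.congr_deriv
      (by simp only [id]; ring)
  have := sub_le_sub_of_hasDerivWithinAt_le (convex_Icc a b) hF hquad hslope hx hb hx.2
  linarith

theorem dip_from_endpoint_slope_general
    (H b : ℝ) (hH : 0 < H) (F F' F'' : ℝ → ℝ)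
    (hF : ∀ x ∈ Set.Icc (0:ℝ) b, HasDerivWithinAt F (F' x) (Set.Icc 0 b) x)
    (hF' : ∀ x ∈ Set.Icc (0:ℝ) b, HasDerivWithinAt F' (F'' x) (Set.Icc 0 b) x)
    (hbd : ∀ x ∈ Set.Icc (0:ℝ) b, F'' x ≤ H)
    (h1 : 0 < F' b) (h2 : F' b ≤ 2 * H * b) :
    (F' b) ^ 2 / (4 * H) ≤ F b - sInf (F '' Set.Icc (0:ℝ) b) := by
  set δ := F' b / (2 * H) with hδ
  have hδ_pos : 0 < δ := by positivity
  have hδ_le : δ ≤ b := by rw [hδ, div_le_iff₀ (by positivity)]; linarith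
  have hmem : b - δ ∈ Icc 0 b := ⟨by linarith, by linarith⟩
  have hdip := sub_mul_sub_sub_sq_le_of_hasDerivWithinAt hF hF' hbd hmem
  have hinf : sInf (F '' Icc 0 b) ≤ F (b - δ) :=
    csInf_le (isCompact_Icc.image_of_continuousOn fun x hx => (hF x hx).continuousWithinAt).bddBelow
      (mem_image_of_mem F hmem)
  have hvalue : F' b * δ - H * δ ^ 2 / 2 = 3 / 2 * (F' b ^ 2 / (4 * H)) := by
    rw [hδ]; field_simp; ring
  have hpos : 0 < F' b ^ 2 / (4 * H) := by positivity
  rw [sub_sub_cancel] at hdip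
  linarith

/-- If `F` is twice continuously differentiable on `[0,b]` with `F'' ≤ H`
(`H > 0`), and `0 < F'(b) ≤ 2·H·b`, then `F(b) − inf_{[0,b]} F ≥ F'(b)²/(4H)`. -/
theorem dip_from_endpoint_slope
    (H b : ℝ) (hH : 0 < H) (hb : 0 < b) (F F' F'' : ℝ → ℝ)
    (hF : ∀ x ∈ Set.Icc (0:ℝ) b, HasDerivWithinAt F (F' x) (Set.Icc 0 b) x)
    (hF' : ∀ x ∈ Set.Icc (0:ℝ) b, HasDerivWithinAt F' (F'' x) (Set.Icc 0 b) x)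
    (hF''cont : ContinuousOn F'' (Set.Icc 0 b))
    (hbd : ∀ x ∈ Set.Icc (0:ℝ) b, F'' x ≤ H)
    (h1 : 0 < F' b) (h2 : F' b ≤ 2 * H * b) :
    (F' b) ^ 2 / (4 * H) ≤ F b - sInf (F '' Set.Icc (0:ℝ) b) :=
  dip_from_endpoint_slope_general H b hH F F' F'' hF hF' hbd h1 h2
end

section
/- Let B, κ, η, t̄ be real numbers with B > 1, κ ≥ 0, 0 ≤ η ≤ 1/2, t̄ ≥ 0, and κ·t̄ < 1. Let μ⋆, m : [0, t̄] → ℝ be continuous functions satisfying, for every s ∈ [0, t̄], (1 − η)·(1 − κ·s) ≤ μ⋆(s) ≤ (1 + η)·(1 − κ·s) and 0 ≤ m(s) ≤ (1 + η)·κ. Then ∫₀^{t̄} m(s)·μ⋆(s)^{−B} ds ≤ ((1 + η)/(1 − η))^B · (B − 1)^{−1} · μ⋆(t̄)^{1−B}. -/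
/-! On `[0, t̄]` the bounds `μ⋆ ≥ (1 - η)(1 - κ s)` and `m ≤ (1 + η) κ` dominate the
integrand by `(1 + η)(1 - η)^{-B} · κ (1 - κ s)^{-B}`, the derivative of
`(1 - κ s)^{1-B} / (B - 1)`. So the integral is at most
`(1 + η)(1 - η)^{-B} (1 - κ t̄)^{1-B} / (B - 1)`, and the upper bound
`μ⋆(t̄) ≤ (1 + η)(1 - κ t̄)` turns `(1 - κ t̄)^{1-B}` into `(1 + η)^{B-1} μ⋆(t̄)^{1-B}`. -/

open Set MeasureTheory

namespace intervalIntegral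

theorem integral_mono_on_of_nonneg {f g : ℝ → ℝ} {a b : ℝ} (hab : a ≤ b)
    (hg : IntervalIntegrable g volume a b) (hf : ∀ x ∈ Icc a b, 0 ≤ f x)
    (hfg : ∀ x ∈ Icc a b, f x ≤ g x) : ∫ x in a..b, f x ≤ ∫ x in a..b, g x := by
  by_cases hfi : IntervalIntegrable f volume a b
  · exact integral_mono_on hab hfi hg hfg
  · rw [integral_undef hfi]
    exact integral_nonneg hab fun x hx => (hf x hx).trans (hfg x hx)

end intervalIntegral

section LinearDecay

variable {κ t B : ℝ}

lemma one_sub_mul_pos_of_mem_Icc (hκt : κ * t < 1) {s : ℝ} (hs : s ∈ Icc 0 t) :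
    0 < 1 - κ * s := by
  rcases le_total 0 κ with hκ | hκ <;> nlinarith [hs.1, hs.2]

lemma hasDerivAt_one_sub_mul_rpow_div {s : ℝ} (hB : B ≠ 1) (hs : 0 < 1 - κ * s) :
    HasDerivAt (fun s => (1 - κ * s) ^ (1 - B) / (B - 1)) (κ * (1 - κ * s) ^ (-B)) s := by
  have hlin : HasDerivAt (fun s : ℝ => 1 - κ * s) (-κ) s := by
    simpa using ((hasDerivAt_id s).const_mul κ).const_sub 1
  refine ((hlin.rpow_const (p := 1 - B) (Or.inl hs.ne')).div_const (B - 1)).congr_deriv ?_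
  have hB' : B - 1 ≠ 0 := sub_ne_zero.mpr hB
  rw [show 1 - B - 1 = -B by ring]
  field_simp
  ring

lemma intervalIntegrable_mul_one_sub_mul_rpow_neg (ht : 0 ≤ t) (hκt : κ * t < 1) :
    IntervalIntegrable (fun s => κ * (1 - κ * s) ^ (-B)) volume 0 t := by
  refine ContinuousOn.intervalIntegrable ?_
  rw [uIcc_of_le ht]
  exact continuousOn_const.mul <|
    (continuousOn_const.sub (continuousOn_const.mul continuousOn_id)).rpow_const
      fun s hs => Or.inl (one_sub_mul_pos_of_mem_Icc hκt hs).ne'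

lemma integral_mul_one_sub_mul_rpow_neg (hB : B ≠ 1) (ht : 0 ≤ t) (hκt : κ * t < 1) :
    ∫ s in (0 : ℝ)..t, κ * (1 - κ * s) ^ (-B) = ((1 - κ * t) ^ (1 - B) - 1) / (B - 1) := by
  rw [intervalIntegral.integral_eq_sub_of_hasDerivAt
    (fun s hs => hasDerivAt_one_sub_mul_rpow_div hB
      (one_sub_mul_pos_of_mem_Icc hκt (uIcc_of_le ht ▸ hs)))
    (intervalIntegrable_mul_one_sub_mul_rpow_neg ht hκt)]
  simp only [mul_zero, sub_zero, Real.one_rpow]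
  ring

lemma integral_mul_one_sub_mul_rpow_neg_le (hB : 1 < B) (ht : 0 ≤ t) (hκt : κ * t < 1) :
    ∫ s in (0 : ℝ)..t, κ * (1 - κ * s) ^ (-B) ≤ (1 - κ * t) ^ (1 - B) / (B - 1) := by
  rw [integral_mul_one_sub_mul_rpow_neg hB.ne' ht hκt]
  gcongr
  linarith

theorem integral_mul_rpow_neg_le_of_linear_lower_bound {m μ : ℝ → ℝ} {K c : ℝ}
    (hK : 0 ≤ K) (hc : 0 < c) (hB : 1 < B) (ht : 0 ≤ t) (hκt : κ * t < 1)
    (hm0 : ∀ s ∈ Icc 0 t, 0 ≤ m s) (hm : ∀ s ∈ Icc 0 t, m s ≤ K * κ)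
    (hμ : ∀ s ∈ Icc 0 t, c * (1 - κ * s) ≤ μ s) :
    ∫ s in (0 : ℝ)..t, m s * μ s ^ (-B) ≤
      K * c ^ (-B) * ((1 - κ * t) ^ (1 - B) / (B - 1)) := by
  have hμpos : ∀ s ∈ Icc 0 t, 0 < μ s := fun s hs =>
    (mul_pos hc (one_sub_mul_pos_of_mem_Icc hκt hs)).trans_le (hμ s hs)
  have hpointwise : ∀ s ∈ Icc 0 t,
      m s * μ s ^ (-B) ≤ K * c ^ (-B) * (κ * (1 - κ * s) ^ (-B)) := by
    intro s hs
    have hp := one_sub_mul_pos_of_mem_Icc hκt hs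
    have hμB : μ s ^ (-B) ≤ (c * (1 - κ * s)) ^ (-B) :=
      Real.rpow_le_rpow_of_nonpos (by positivity) (hμ s hs) (by linarith)
    calc m s * μ s ^ (-B) ≤ K * κ * (c * (1 - κ * s)) ^ (-B) :=
          mul_le_mul (hm s hs) hμB (Real.rpow_nonneg (hμpos s hs).le _)
            ((hm0 s hs).trans (hm s hs))
      _ = K * c ^ (-B) * (κ * (1 - κ * s) ^ (-B)) := by
          rw [Real.mul_rpow hc.le hp.le]; ring
  calc ∫ s in (0 : ℝ)..t, m s * μ s ^ (-B)
      ≤ ∫ s in (0 : ℝ)..t, K * c ^ (-B) * (κ * (1 - κ * s) ^ (-B)) :=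
        intervalIntegral.integral_mono_on_of_nonneg ht
          ((intervalIntegrable_mul_one_sub_mul_rpow_neg ht hκt).const_mul _)
          (fun s hs => mul_nonneg (hm0 s hs) (Real.rpow_nonneg (hμpos s hs).le _)) hpointwise
    _ = K * c ^ (-B) * ∫ s in (0 : ℝ)..t, κ * (1 - κ * s) ^ (-B) :=
        intervalIntegral.integral_const_mul _ _
    _ ≤ K * c ^ (-B) * ((1 - κ * t) ^ (1 - B) / (B - 1)) := by
        gcongr
        exact integral_mul_one_sub_mul_rpow_neg_le hB ht hκt

end LinearDecay

lemma Real.rpow_le_rpow_neg_mul_rpow_of_le_mul {x y a e : ℝ} (hx : 0 < x) (ha : 0 < a)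
    (hy : 0 < y) (hxy : x ≤ a * y) (he : e ≤ 0) : y ^ e ≤ a ^ (-e) * x ^ e := by
  have hay : (a * y) ^ e ≤ x ^ e := Real.rpow_le_rpow_of_nonpos hx hxy he
  calc y ^ e = a ^ (-e) * (a * y) ^ e := by
        rw [Real.mul_rpow ha.le hy.le, ← mul_assoc, ← Real.rpow_add ha, neg_add_cancel,
          Real.rpow_zero, one_mul]
    _ ≤ a ^ (-e) * x ^ e := by gcongr

theorem borderline_time_integral_estimate_general
    (B κ η tbar : ℝ) (hB : 1 < B) (hη0 : 0 ≤ η) (hη : η ≤ 1 / 2)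
    (htbar : 0 ≤ tbar) (hκt : κ * tbar < 1)
    (μstar m : ℝ → ℝ)
    (hμlb : ∀ s ∈ Set.Icc (0:ℝ) tbar, (1 - η) * (1 - κ * s) ≤ μstar s)
    (hμub : ∀ s ∈ Set.Icc (0:ℝ) tbar, μstar s ≤ (1 + η) * (1 - κ * s))
    (hm0 : ∀ s ∈ Set.Icc (0:ℝ) tbar, 0 ≤ m s)
    (hm1 : ∀ s ∈ Set.Icc (0:ℝ) tbar, m s ≤ (1 + η) * κ) :
    (∫ s in (0:ℝ)..tbar, m s * μstar s ^ (-B)) ≤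
      ((1 + η) / (1 - η)) ^ B * (B - 1)⁻¹ * μstar tbar ^ (1 - B) := by
  have hη1 : 0 < 1 - η := by linarith
  have htmem : tbar ∈ Icc 0 tbar := right_mem_Icc.mpr htbar
  have hp : 0 < 1 - κ * tbar := one_sub_mul_pos_of_mem_Icc hκt htmem
  have hμt : 0 < μstar tbar := (mul_pos hη1 hp).trans_le (hμlb tbar htmem)
  have hend : (1 - κ * tbar) ^ (1 - B) ≤ (1 + η) ^ (B - 1) * μstar tbar ^ (1 - B) := by
    simpa using Real.rpow_le_rpow_neg_mul_rpow_of_le_mul hμt (by linarith) hp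
      (hμub tbar htmem) (by linarith : 1 - B ≤ 0)
  calc ∫ s in (0:ℝ)..tbar, m s * μstar s ^ (-B)
      ≤ (1 + η) * (1 - η) ^ (-B) * ((1 - κ * tbar) ^ (1 - B) / (B - 1)) :=
        integral_mul_rpow_neg_le_of_linear_lower_bound (by linarith) hη1 hB htbar hκt
          hm0 hm1 hμlb
    _ ≤ (1 + η) * (1 - η) ^ (-B) * ((1 + η) ^ (B - 1) * μstar tbar ^ (1 - B) / (B - 1)) := by
        gcongr
    _ = ((1 + η) / (1 - η)) ^ B * (B - 1)⁻¹ * μstar tbar ^ (1 - B) := by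
        rw [Real.div_rpow (by linarith) hη1.le, Real.rpow_neg hη1.le,
          Real.rpow_sub_one (by linarith : (1 + η) ≠ 0)]
        field_simp

/-- The borderline top-order time-integral estimate: if `μ⋆` decays
approximately linearly like `1 − κ·s` (up to a factor `1 ± η`) and `0 ≤ m ≤ (1+η)·κ`, then
for `B > 1`, `∫₀^{t̄} m·μ⋆^{−B} ≤ ((1+η)/(1−η))^B·(B−1)⁻¹·μ⋆(t̄)^{1−B}`. -/
theorem borderline_time_integral_estimate
    (B κ η tbar : ℝ) (hB : 1 < B) (hκ : 0 ≤ κ) (hη0 : 0 ≤ η) (hη : η ≤ 1 / 2)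
    (htbar : 0 ≤ tbar) (hκt : κ * tbar < 1)
    (μstar m : ℝ → ℝ)
    (hμcont : ContinuousOn μstar (Set.Icc 0 tbar))
    (hmcont : ContinuousOn m (Set.Icc 0 tbar))
    (hμlb : ∀ s ∈ Set.Icc (0:ℝ) tbar, (1 - η) * (1 - κ * s) ≤ μstar s)
    (hμub : ∀ s ∈ Set.Icc (0:ℝ) tbar, μstar s ≤ (1 + η) * (1 - κ * s))
    (hm0 : ∀ s ∈ Set.Icc (0:ℝ) tbar, 0 ≤ m s)
    (hm1 : ∀ s ∈ Set.Icc (0:ℝ) tbar, m s ≤ (1 + η) * κ) :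
    (∫ s in (0:ℝ)..tbar, m s * μstar s ^ (-B)) ≤
      ((1 + η) / (1 - η)) ^ B * (B - 1)⁻¹ * μstar tbar ^ (1 - B) :=
  borderline_time_integral_estimate_general B κ η tbar hB hη0 hη htbar hκt μstar m hμlb hμub hm0 hm1
end

section
/- Let κ, η, t̄ be real numbers with κ ≥ 0, 0 ≤ η ≤ 1/2, t̄ ≥ 0, and κ·t̄ < 1. Let μ⋆, m : [0, t̄] → ℝ be continuous functions satisfying, for every s ∈ [0, t̄], (1 − η)·(1 − κ·s) ≤ μ⋆(s) ≤ (1 + η)·(1 − κ·s) and 0 ≤ m(s) ≤ (1 + η)·κ. Then ∫₀^{t̄} m(s)/μ⋆(s) ds ≤ ((1 + η)/(1 − η)) · ( log(μ⋆(t̄)^{−1}) + log(1 + η) ). -/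
/-!
Since `μ⋆(s) ≥ (1 - η)(1 - κ s)` and `m(s) ≤ (1 + η) κ`, the integrand is dominated by
`((1 + η)/(1 - η)) · κ/(1 - κ s)`, whose integral over `[0, t̄]` is `-log(1 - κ t̄)`.
The upper bound `μ⋆(t̄) ≤ (1 + η)(1 - κ t̄)` turns this into `log μ⋆(t̄)⁻¹ + log(1 + η)`.
-/

open MeasureTheory Set intervalIntegral

lemma one_sub_mul_pos_of_mem_uIcc {κ t s : ℝ} (ht : κ * t < 1) (hs : s ∈ uIcc 0 t) :
    0 < 1 - κ * s := by
  rcases mem_uIcc.mp hs with ⟨_, _⟩ | ⟨_, _⟩ <;> rcases le_total 0 κ with _ | _ <;> nlinarith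

theorem integral_div_one_sub_mul {κ t : ℝ} (ht : κ * t < 1) :
    ∫ s in (0 : ℝ)..t, κ / (1 - κ * s) = -Real.log (1 - κ * t) := by
  have hpos : ∀ s ∈ uIcc 0 t, 1 - κ * s ≠ 0 := fun s hs =>
    (one_sub_mul_pos_of_mem_uIcc ht hs).ne'
  have hderiv : ∀ s ∈ uIcc 0 t,
      HasDerivAt (fun x => -Real.log (1 - κ * x)) (κ / (1 - κ * s)) s := fun s hs => by
    have hlin : HasDerivAt (fun x : ℝ => 1 - κ * x) (-κ) s := by
      simpa using ((hasDerivAt_id s).const_mul κ).const_sub 1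
    exact (hlin.log (hpos s hs)).neg.congr_deriv (by ring)
  have hint : IntervalIntegrable (fun s => κ / (1 - κ * s)) volume 0 t :=
    (continuousOn_const.div (by fun_prop) hpos).intervalIntegrable
  simp [integral_eq_sub_of_hasDerivAt hderiv hint]

lemma neg_log_le_log_inv_add_log {x a b : ℝ} (hx : 0 < x) (hb : 0 < b) (hxab : x ≤ a * b) :
    -Real.log b ≤ Real.log x⁻¹ + Real.log a := by
  have ha : 0 < a := pos_of_mul_pos_left (hx.trans_le hxab) hb.le
  have := Real.log_le_log hx hxab
  rw [Real.log_mul ha.ne' hb.ne'] at this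
  rw [Real.log_inv]
  linarith

theorem log_loss_time_integral_estimate_general
    (κ η tbar : ℝ) (hκ : 0 ≤ κ) (hη0 : 0 ≤ η) (hη : η ≤ 1 / 2)
    (htbar : 0 ≤ tbar) (hκt : κ * tbar < 1)
    (μstar m : ℝ → ℝ)
    (hμcont : ContinuousOn μstar (Set.Icc 0 tbar))
    (hmcont : ContinuousOn m (Set.Icc 0 tbar))
    (hμlb : ∀ s ∈ Set.Icc (0:ℝ) tbar, (1 - η) * (1 - κ * s) ≤ μstar s)
    (hμub : ∀ s ∈ Set.Icc (0:ℝ) tbar, μstar s ≤ (1 + η) * (1 - κ * s))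
    (hm1 : ∀ s ∈ Set.Icc (0:ℝ) tbar, m s ≤ (1 + η) * κ) :
    (∫ s in (0:ℝ)..tbar, m s / μstar s) ≤
      ((1 + η) / (1 - η)) * (Real.log ((μstar tbar)⁻¹) + Real.log (1 + η)) := by
  have hη1 : 0 < 1 - η := by linarith
  have hlin : ∀ s ∈ Icc 0 tbar, 0 < 1 - κ * s := fun s hs =>
    one_sub_mul_pos_of_mem_uIcc hκt (by rwa [uIcc_of_le htbar])
  have hμpos : ∀ s ∈ Icc 0 tbar, 0 < μstar s := fun s hs =>
    (mul_pos hη1 (hlin s hs)).trans_le (hμlb s hs)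
  have hdom : ∀ s ∈ Icc 0 tbar, m s / μstar s ≤ (1 + η) / (1 - η) * (κ / (1 - κ * s)) :=
    fun s hs => by
      rw [div_mul_div_comm]
      exact div_le_div₀ (by positivity) (hm1 s hs) (mul_pos hη1 (hlin s hs)) (hμlb s hs)
  have hint_lhs : IntervalIntegrable (fun s => m s / μstar s) volume 0 tbar :=
    (hmcont.div hμcont fun s hs => (hμpos s hs).ne').intervalIntegrable_of_Icc htbar
  have hint_dom :
      IntervalIntegrable (fun s => (1 + η) / (1 - η) * (κ / (1 - κ * s))) volume 0 tbar :=
    (continuousOn_const.mul (continuousOn_const.div (by fun_prop) fun s hs => (hlin s hs).ne')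
      ).intervalIntegrable_of_Icc htbar
  have htbar_mem : tbar ∈ Icc 0 tbar := right_mem_Icc.mpr htbar
  calc (∫ s in (0:ℝ)..tbar, m s / μstar s)
      ≤ ∫ s in (0:ℝ)..tbar, (1 + η) / (1 - η) * (κ / (1 - κ * s)) :=
        integral_mono_on htbar hint_lhs hint_dom hdom
    _ = (1 + η) / (1 - η) * -Real.log (1 - κ * tbar) := by
        rw [intervalIntegral.integral_const_mul, integral_div_one_sub_mul hκt]
    _ ≤ _ := mul_le_mul_of_nonneg_left
        (neg_log_le_log_inv_add_log (hμpos tbar htbar_mem) (hlin tbar htbar_mem)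
          (hμub tbar htbar_mem)) (by positivity)

/-- The time-integral estimate with only logarithmic degeneracy: if `μ⋆`
decays approximately linearly like `1 − κ·s` (up to a factor `1 ± η`) and
`0 ≤ m ≤ (1+η)·κ`, then `∫₀^{t̄} m/μ⋆ ≤ ((1+η)/(1−η))·(log(μ⋆(t̄)⁻¹) + log(1+η))`. -/
theorem log_loss_time_integral_estimate
    (κ η tbar : ℝ) (hκ : 0 ≤ κ) (hη0 : 0 ≤ η) (hη : η ≤ 1 / 2)
    (htbar : 0 ≤ tbar) (hκt : κ * tbar < 1)
    (μstar m : ℝ → ℝ)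
    (hμcont : ContinuousOn μstar (Set.Icc 0 tbar))
    (hmcont : ContinuousOn m (Set.Icc 0 tbar))
    (hμlb : ∀ s ∈ Set.Icc (0:ℝ) tbar, (1 - η) * (1 - κ * s) ≤ μstar s)
    (hμub : ∀ s ∈ Set.Icc (0:ℝ) tbar, μstar s ≤ (1 + η) * (1 - κ * s))
    (hm0 : ∀ s ∈ Set.Icc (0:ℝ) tbar, 0 ≤ m s)
    (hm1 : ∀ s ∈ Set.Icc (0:ℝ) tbar, m s ≤ (1 + η) * κ) :
    (∫ s in (0:ℝ)..tbar, m s / μstar s) ≤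
      ((1 + η) / (1 - η)) * (Real.log ((μstar tbar)⁻¹) + Real.log (1 + η)) :=
  log_loss_time_integral_estimate_general κ η tbar hκ hη0 hη htbar hκt μstar m hμcont hmcont hμlb
    hμub hm1
end

section
/- Let T ≥ 0, U ≥ 0, a ≥ 0, and C ≥ 0 be real numbers and let M : [0, T] × [0, U] → ℝ be continuous and nonnegative, satisfying M(t, u) ≤ a + C·∫₀ᵗ M(s, u) ds + C·∫₀ᵘ M(t, s) ds for all (t, u) ∈ [0, T] × [0, U]. Then M(t, u) ≤ a·exp(2C·(t + u)) for all (t, u) ∈ [0, T] × [0, U]. -/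
/-!
Let `K` be the maximum over the rectangle of `M(t, u) e^{-2C(t+u)}`, attained at `(t₀, u₀)`, and
write `X = e^{2Ct₀}`, `Y = e^{2Cu₀}`. Bounding `M` by `K e^{2C(t+u)}` inside both integrals, the
hypothesis at `(t₀, u₀)` gives `K X Y ≤ a + K Y (X - 1) / 2 + K X (Y - 1) / 2`, that is
`K (X + Y) ≤ 2a`. Since `X, Y ≥ 1` and `a ≥ 0`, this forces `K ≤ a`.
-/

open MeasureTheory Set Real

theorem integral_mul_exp_mul (c a b : ℝ) :
    ∫ s in a..b, c * exp (c * s) = exp (c * b) - exp (c * a) := by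
  refine intervalIntegral.integral_eq_sub_of_hasDerivAt (f := fun s => exp (c * s))
    (fun s _ => ?_)
    ((by fun_prop : Continuous fun s => c * exp (c * s)).intervalIntegrable a b)
  simpa [mul_comm] using ((hasDerivAt_id s).const_mul c).exp

theorem mul_integral_le_of_le_mul_exp {f : ℝ → ℝ} {K c t : ℝ} (hc : 0 ≤ c) (ht : 0 ≤ t)
    (hf : IntervalIntegrable f volume 0 t) (hle : ∀ s ∈ Icc 0 t, f s ≤ K * exp (c * s)) :
    c * ∫ s in 0..t, f s ≤ K * (exp (c * t) - 1) := by
  calc c * ∫ s in 0..t, f s = ∫ s in 0..t, c * f s := (intervalIntegral.integral_const_mul ..).symm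
    _ ≤ ∫ s in 0..t, K * (c * exp (c * s)) :=
        intervalIntegral.integral_mono_on ht (hf.const_mul c)
          (Continuous.intervalIntegrable (by fun_prop) 0 t) fun s hs => by
            nlinarith [hle s hs]
    _ = K * (exp (c * t) - 1) := by
        rw [intervalIntegral.integral_const_mul, integral_mul_exp_mul, mul_zero, exp_zero]

theorem le_of_mul_exp_le_add_integrals {f g : ℝ → ℝ} {t u a C K : ℝ} (ha : 0 ≤ a) (hC : 0 ≤ C)
    (ht : 0 ≤ t) (hu : 0 ≤ u)
    (hf : IntervalIntegrable f volume 0 t) (hg : IntervalIntegrable g volume 0 u)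
    (hf_le : ∀ s ∈ Icc 0 t, f s ≤ K * exp (2 * C * (s + u)))
    (hg_le : ∀ s ∈ Icc 0 u, g s ≤ K * exp (2 * C * (t + s)))
    (h : K * exp (2 * C * (t + u)) ≤ a + C * (∫ s in 0..t, f s) + C * ∫ s in 0..u, g s) :
    K ≤ a := by
  have h2C : 0 ≤ 2 * C := by positivity
  have hf' := mul_integral_le_of_le_mul_exp (K := K * exp (2 * C * u)) h2C ht hf fun s hs => by
    rw [mul_assoc, ← exp_add, ← mul_add, add_comm u]; exact hf_le s hs
  have hg' := mul_integral_le_of_le_mul_exp (K := K * exp (2 * C * t)) h2C hu hg fun s hs => by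
    rw [mul_assoc, ← exp_add, ← mul_add]; exact hg_le s hs
  have hX : 1 ≤ exp (2 * C * t) := one_le_exp (by positivity)
  have hY : 1 ≤ exp (2 * C * u) := one_le_exp (by positivity)
  rw [mul_add, exp_add] at h
  nlinarith

theorem le_mul_exp_of_mul_exp_neg_le {x y K : ℝ} (h : x * exp (-y) ≤ K) : x ≤ K * exp y := by
  rwa [exp_neg, ← div_eq_mul_inv, div_le_iff₀ (exp_pos y)] at h

theorem intervalIntegrable_fst_slice {M : ℝ → ℝ → ℝ} {T U t u : ℝ}
    (hM : ContinuousOn (fun p : ℝ × ℝ => M p.1 p.2) (Icc 0 T ×ˢ Icc 0 U))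
    (ht : t ∈ Icc 0 T) (hu : u ∈ Icc 0 U) :
    IntervalIntegrable (fun s => M s u) volume 0 t := by
  refine (hM.comp (Continuous.continuousOn (by fun_prop : Continuous fun s : ℝ => (s, u)))
    fun s hs => ⟨?_, hu⟩).intervalIntegrable
  rw [uIcc_of_le ht.1] at hs
  exact ⟨hs.1, hs.2.trans ht.2⟩

theorem intervalIntegrable_snd_slice {M : ℝ → ℝ → ℝ} {T U t u : ℝ}
    (hM : ContinuousOn (fun p : ℝ × ℝ => M p.1 p.2) (Icc 0 T ×ˢ Icc 0 U))
    (ht : t ∈ Icc 0 T) (hu : u ∈ Icc 0 U) :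
    IntervalIntegrable (fun s => M t s) volume 0 u := by
  refine (hM.comp (Continuous.continuousOn (by fun_prop : Continuous fun s : ℝ => (t, s)))
    fun s hs => ⟨ht, ?_⟩).intervalIntegrable
  rw [uIcc_of_le hu.1] at hs
  exact ⟨hs.1, hs.2.trans hu.2⟩

theorem two_variable_gronwall_general
    (T U a C : ℝ) (ha : 0 ≤ a) (hC : 0 ≤ C)
    (M : ℝ → ℝ → ℝ)
    (hMcont : ContinuousOn (fun p : ℝ × ℝ => M p.1 p.2) (Set.Icc 0 T ×ˢ Set.Icc 0 U))
    (hineq : ∀ t ∈ Set.Icc (0:ℝ) T, ∀ u ∈ Set.Icc (0:ℝ) U,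
      M t u ≤ a + C * (∫ s in (0:ℝ)..t, M s u) + C * (∫ s in (0:ℝ)..u, M t s)) :
    ∀ t ∈ Set.Icc (0:ℝ) T, ∀ u ∈ Set.Icc (0:ℝ) U,
      M t u ≤ a * Real.exp (2 * C * (t + u)) := by
  intro t ht u hu
  obtain ⟨p, ⟨hp₁, hp₂⟩, hmax⟩ := (isCompact_Icc.prod isCompact_Icc).exists_isMaxOn
    ⟨(t, u), ht, hu⟩ (hMcont.mul (Continuous.continuousOn (by fun_prop)) :
      ContinuousOn (fun q : ℝ × ℝ => M q.1 q.2 * exp (-(2 * C * (q.1 + q.2)))) _)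
  set K := M p.1 p.2 * exp (-(2 * C * (p.1 + p.2)))
  have hbound : ∀ s ∈ Icc 0 T, ∀ r ∈ Icc 0 U, M s r ≤ K * exp (2 * C * (s + r)) :=
    fun s hs r hr => le_mul_exp_of_mul_exp_neg_le (hmax (show (s, r) ∈ _ from ⟨hs, hr⟩))
  have hMp : M p.1 p.2 = K * exp (2 * C * (p.1 + p.2)) := by
    rw [mul_assoc, ← exp_add, neg_add_cancel, exp_zero, mul_one]
  have hKa : K ≤ a := le_of_mul_exp_le_add_integrals ha hC hp₁.1 hp₂.1
    (intervalIntegrable_fst_slice hMcont hp₁ hp₂) (intervalIntegrable_snd_slice hMcont hp₁ hp₂)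
    (fun s hs => hbound s ⟨hs.1, hs.2.trans hp₁.2⟩ p.2 hp₂)
    (fun s hs => hbound p.1 hp₁ s ⟨hs.1, hs.2.trans hp₂.2⟩) (hMp ▸ hineq p.1 hp₁ p.2 hp₂)
  exact (hbound t ht u hu).trans (mul_le_mul_of_nonneg_right hKa (exp_pos _).le)

/-- A two-variable (Wendroff-type) Gronwall inequality: if the continuous
nonnegative function `M` on `[0,T] × [0,U]` satisfies
`M(t,u) ≤ a + C·∫₀ᵗ M(s,u) ds + C·∫₀ᵘ M(t,s) ds`, then `M(t,u) ≤ a·exp(2C·(t+u))`. -/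
theorem two_variable_gronwall
    (T U a C : ℝ) (hT : 0 ≤ T) (hU : 0 ≤ U) (ha : 0 ≤ a) (hC : 0 ≤ C)
    (M : ℝ → ℝ → ℝ)
    (hMcont : ContinuousOn (fun p : ℝ × ℝ => M p.1 p.2) (Set.Icc 0 T ×ˢ Set.Icc 0 U))
    (hM0 : ∀ t ∈ Set.Icc (0:ℝ) T, ∀ u ∈ Set.Icc (0:ℝ) U, 0 ≤ M t u)
    (hineq : ∀ t ∈ Set.Icc (0:ℝ) T, ∀ u ∈ Set.Icc (0:ℝ) U,
      M t u ≤ a + C * (∫ s in (0:ℝ)..t, M s u) + C * (∫ s in (0:ℝ)..u, M t s)) :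
    ∀ t ∈ Set.Icc (0:ℝ) T, ∀ u ∈ Set.Icc (0:ℝ) U,
      M t u ≤ a * Real.exp (2 * C * (t + u)) :=
  two_variable_gronwall_general T U a C ha hC M hMcont hineq
end
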